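/- Let x_1, …, x_n ∈ ℝ^d be distinct and define the RS-GAN loss φ_RS(Y, X) = sup over continuous f : ℝ^d → ℝ of (1/n) · Σ_{i=1}^n log(1/(1 + exp(f(y_i) − f(x_i)))). Then the global minimal value of Y ↦ φ_RS(Y, X) is −log 2, achieved if and only if there is a permutation σ of {1,…,n} with y_i = x_{σ(i)} for all i; furthermore, every Y ∈ (ℝ^d)^n is global-min-reachable for this function. -/

import Mathlib

/-!
Draw an arrow `i → j` whenever `y i = x j`; as the `x j` are distinct, each vertex has at most
one outgoing arrow. If `C` is the set of vertices lying on a cycle, then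
`φ_RS(Y) = -(log 2) |C| / n`. Indeed the arrows permute `C`, so `∑_{i ∈ C} (f (y i) - f (x i)) = 0`
for every `f`, and `log (1 / (1 + eᵗ)) ≤ -log 2 - t / 2` by AM-GM, while every term is `≤ 0`.
Conversely, a continuous `f` with `f (x j) = M · #{vertices reachable from j}` and `f = 0` at the
remaining `y i` makes the differences vanish on `C` and be `≤ -M` off `C`; let `M → ∞`.

So the minimum `-log 2` is attained exactly when `C` is everything, i.e. when `Y` is a
permutation of `X`. Otherwise some `x i` is none of the `y k`; sliding `y i` straight to `x i`
leaves `C` unchanged until the end, when `i` becomes a fixed point. Hence `φ_RS` does not increase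
along this move, and finitely many such moves reach a minimizer.
-/

open scoped BigOperators

/-- The RS-GAN loss
φ_RS(Y, X) = sup over continuous f of (1/n) · Σ_i log(1/(1 + exp(f(y_i) − f(x_i)))). -/
noncomputable def phiRS {d n : ℕ} (x Y : Fin n → EuclideanSpace ℝ (Fin d)) : ℝ :=
  sSup {s : ℝ | ∃ f : EuclideanSpace ℝ (Fin d) → ℝ, Continuous f ∧
    s = (1 / (n : ℝ)) * ∑ i, Real.log (1 / (1 + Real.exp (f (Y i) - f (x i))))}

/-- A point `Y` is global-min-reachable for `F` if there is a continuous path starting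
at `Y`, along which `F` is non-increasing, ending at a global minimizer of `F`. -/
def GlobalMinReachable {E : Type*} [TopologicalSpace E] (F : E → ℝ) (Y : E) : Prop :=
  ∃ γ : ℝ → E, ContinuousOn γ (Set.Icc 0 1) ∧ γ 0 = Y ∧
    (∀ s ∈ Set.Icc (0 : ℝ) 1, ∀ t ∈ Set.Icc (0 : ℝ) 1, s ≤ t → F (γ t) ≤ F (γ s)) ∧
    (∀ Y', F (γ 1) ≤ F Y')

open Finset Relation Filter Topology Function

noncomputable def rsTerm (t : ℝ) : ℝ := Real.log (1 / (1 + Real.exp t))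

lemma rsTerm_eq (t : ℝ) : rsTerm t = -Real.log (1 + Real.exp t) := by
  rw [rsTerm, one_div, Real.log_inv]

lemma rsTerm_nonpos (t : ℝ) : rsTerm t ≤ 0 := by
  rw [rsTerm_eq, neg_nonpos]
  exact Real.log_nonneg (by linarith [Real.exp_pos t])

lemma rsTerm_zero : rsTerm 0 = -Real.log 2 := by
  rw [rsTerm_eq, Real.exp_zero, one_add_one_eq_two]

lemma rsTerm_antitone : Antitone rsTerm := fun s t hst => by
  rw [rsTerm_eq, rsTerm_eq, neg_le_neg_iff]
  exact Real.log_le_log (by positivity) (by gcongr)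

lemma rsTerm_le (t : ℝ) : rsTerm t ≤ -Real.log 2 - t / 2 := by
  have hexp : Real.exp (t / 2) * Real.exp (t / 2) = Real.exp t := by rw [← Real.exp_add, add_halves]
  have amgm : 2 * Real.exp (t / 2) ≤ 1 + Real.exp t := by
    nlinarith [sq_nonneg (1 - Real.exp (t / 2))]
  have hlog := Real.log_le_log (by positivity) amgm
  rw [Real.log_mul two_ne_zero (Real.exp_ne_zero _), Real.log_exp] at hlog
  rw [rsTerm_eq]
  linarith

lemma tendsto_rsTerm_atBot : Tendsto rsTerm atBot (𝓝 0) := by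
  have hone : Tendsto (fun t => 1 + Real.exp t) atBot (𝓝 1) := by
    simpa using tendsto_const_nhds.add Real.tendsto_exp_atBot
  have hlog := ((Real.continuousAt_log one_ne_zero).tendsto.comp hone).neg
  rw [Real.log_one, neg_zero] at hlog
  exact hlog.congr fun t => (rsTerm_eq t).symm

theorem exists_continuous_eqOn_of_finite {X : Type*} [TopologicalSpace X] [NormalSpace X]
    [T1Space X] {s : Set X} (hs : s.Finite) (v : X → ℝ) :
    ∃ f : X → ℝ, Continuous f ∧ Set.EqOn f v s := by
  have : Finite s := hs
  obtain ⟨g, hg⟩ :=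
    ContinuousMap.exists_restrict_eq hs.isClosed ⟨s.domRestrict v, continuous_of_discreteTopology⟩
  exact ⟨g, g.continuous, fun z hz => congrArg (· ⟨z, hz⟩) hg⟩

namespace Pairing

variable {ι E : Type*} {x Y Y' : ι → E} {i j k : ι}

def Edge (x Y : ι → E) (i j : ι) : Prop := Y i = x j

def OnCycle (x Y : ι → E) (i : ι) : Prop := TransGen (Edge x Y) i i

lemma Edge.unique (hx : Injective x) (hj : Edge x Y i j) (hk : Edge x Y i k) : j = k :=
  hx (hj.symm.trans hk)

lemma OnCycle.exists_edge (h : OnCycle x Y i) : ∃ j, Edge x Y i j ∧ OnCycle x Y j := by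
  obtain ⟨j, hij, hji⟩ := TransGen.head'_iff.1 h
  exact ⟨j, hij, TransGen.tail' hji hij⟩

lemma OnCycle.exists_edge_to (h : OnCycle x Y j) : ∃ i, Edge x Y i j ∧ OnCycle x Y i := by
  obtain ⟨i, hji, hij⟩ := TransGen.tail'_iff.1 h
  exact ⟨i, hij, TransGen.head' hij hji⟩

lemma OnCycle.reflTransGen_of_edge (hx : Injective x) (h : OnCycle x Y i) (hij : Edge x Y i j) :
    ReflTransGen (Edge x Y) j i := by
  obtain ⟨k, hik, hki⟩ := TransGen.head'_iff.1 h
  rwa [hij.unique hx hik]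

lemma transGen_of_eq_off (hi : ∀ k, Y k ≠ x i) (hY' : ∀ k, k ≠ i → Y' k = Y k)
    {a b : ι} (h : TransGen (Edge x Y) a b) (ha : a ≠ i) : TransGen (Edge x Y') a b := by
  induction h using TransGen.head_induction_on with
  | single hab => exact .single ((hY' _ ha).trans hab)
  | head hac _ ih =>
    refine .head ((hY' _ ha).trans hac) (ih ?_)
    rintro rfl
    exact hi _ hac

lemma OnCycle.ne (hi : ∀ k, Y k ≠ x i) (h : OnCycle x Y j) : j ≠ i := by
  rintro rfl
  obtain ⟨k, hkj, -⟩ := h.exists_edge_to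
  exact hi k hkj

lemma OnCycle.of_eq_off (hi : ∀ k, Y k ≠ x i) (hY' : ∀ k, k ≠ i → Y' k = Y k)
    (h : OnCycle x Y j) : OnCycle x Y' j :=
  transGen_of_eq_off hi hY' h (h.ne hi)

variable [Fintype ι]

open Classical in
noncomputable def cycles (x Y : ι → E) : Finset ι := univ.filter (OnCycle x Y)

lemma mem_cycles : i ∈ cycles x Y ↔ OnCycle x Y i := by
  simp [cycles]

lemma exists_bijOn_cycles (hx : Injective x) :
    ∃ σ : ι → ι, Set.BijOn σ (cycles x Y) (cycles x Y) ∧ ∀ i ∈ cycles x Y, Edge x Y i (σ i) := by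
  choose! σ hσ using fun i (hi : i ∈ cycles x Y) => (mem_cycles.1 hi).exists_edge
  have hmaps : Set.MapsTo σ (cycles x Y) (cycles x Y) := fun i hi => mem_cycles.2 (hσ i hi).2
  have hsurj : Set.SurjOn σ (cycles x Y) (cycles x Y) := fun j hj => by
    obtain ⟨i, hij, hi⟩ := (mem_cycles.1 hj).exists_edge_to
    exact ⟨i, mem_cycles.2 hi, ((hσ i (mem_cycles.2 hi)).1.unique hx hij)⟩
  exact ⟨σ, ((cycles x Y).finite_toSet.surjOn_iff_bijOn_of_mapsTo hmaps).1 hsurj,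
    fun i hi => (hσ i hi).1⟩

lemma sum_cycles_comp_eq {M : Type*} [AddCommMonoid M] (hx : Injective x) (g : E → M) :
    ∑ i ∈ cycles x Y, g (Y i) = ∑ i ∈ cycles x Y, g (x i) := by
  obtain ⟨σ, hσ, hedge⟩ := exists_bijOn_cycles (Y := Y) hx
  exact sum_nbij σ hσ.mapsTo hσ.injOn hσ.surjOn fun i hi => congrArg g (hedge i hi)

lemma exists_perm_of_cycles_eq_univ (hx : Injective x) (h : cycles x Y = univ) :
    ∃ σ : Equiv.Perm ι, ∀ i, Y i = x (σ i) := by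
  obtain ⟨σ, hσ, hedge⟩ := exists_bijOn_cycles (Y := Y) hx
  rw [h, coe_univ] at hσ
  exact ⟨Equiv.ofBijective σ (Set.bijOn_univ.1 hσ), fun i => hedge i (h ▸ mem_univ i)⟩

open Classical in
noncomputable def reach (x Y : ι → E) (i : ι) : Finset ι := univ.filter (ReflTransGen (Edge x Y) i)

lemma mem_reach : j ∈ reach x Y i ↔ ReflTransGen (Edge x Y) i j := by
  simp [reach]

lemma reach_subset_of_edge (hij : Edge x Y i j) : reach x Y j ⊆ reach x Y i :=
  fun _ hk => mem_reach.2 ((mem_reach.1 hk).head hij)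

lemma card_reach_pos : 0 < #(reach x Y i) :=
  card_pos.2 ⟨i, mem_reach.2 .refl⟩

lemma card_reach_of_onCycle (hx : Injective x) (hi : OnCycle x Y i) (hij : Edge x Y i j) :
    #(reach x Y j) = #(reach x Y i) :=
  congrArg card <| (reach_subset_of_edge hij).antisymm fun _ hk =>
    mem_reach.2 ((hi.reflTransGen_of_edge hx hij).trans (mem_reach.1 hk))

lemma card_reach_lt_of_not_onCycle (hi : ¬OnCycle x Y i) (hij : Edge x Y i j) :
    #(reach x Y j) < #(reach x Y i) :=
  card_lt_card ⟨reach_subset_of_edge hij, fun hsub =>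
    hi (TransGen.head' hij (mem_reach.1 (hsub (mem_reach.2 .refl))))⟩

lemma cycles_eq_of_eq_off (hi : ∀ k, Y k ≠ x i) (hi' : ∀ k, Y' k ≠ x i)
    (hY' : ∀ k, k ≠ i → Y' k = Y k) : cycles x Y' = cycles x Y := by
  ext j
  simp only [mem_cycles]
  exact ⟨fun h => h.of_eq_off hi' fun k hk => (hY' k hk).symm, fun h => h.of_eq_off hi hY'⟩

lemma cycles_ssubset_update [DecidableEq ι] (hi : ∀ k, Y k ≠ x i) :
    cycles x Y ⊂ cycles x (update Y i (x i)) := by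
  refine (ssubset_iff_of_subset fun j hj => ?_).2 ⟨i, ?_, fun hmem => ?_⟩
  · exact mem_cycles.2 ((mem_cycles.1 hj).of_eq_off hi fun k hk => update_of_ne hk _ _)
  · exact mem_cycles.2 (.single (show update Y i (x i) i = x i from update_self i (x i) Y))
  · exact (mem_cycles.1 hmem).ne hi rfl

end Pairing

open Pairing

section Loss

variable {d n : ℕ} {x Y : Fin n → EuclideanSpace ℝ (Fin d)}

lemma le_phiRS {f : EuclideanSpace ℝ (Fin d) → ℝ} (hf : Continuous f) :
    (1 / (n : ℝ)) * ∑ i, rsTerm (f (Y i) - f (x i)) ≤ phiRS x Y := by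
  refine le_csSup ⟨0, ?_⟩ ⟨f, hf, rfl⟩
  rintro _ ⟨g, -, rfl⟩
  exact mul_nonpos_of_nonneg_of_nonpos (by positivity) (sum_nonpos fun i _ => rsTerm_nonpos _)

lemma phiRS_le {c : ℝ}
    (h : ∀ f, Continuous f → (1 / (n : ℝ)) * ∑ i, rsTerm (f (Y i) - f (x i)) ≤ c) :
    phiRS x Y ≤ c :=
  csSup_le ⟨_, 0, continuous_const, rfl⟩ (by rintro _ ⟨f, hf, rfl⟩; exact h f hf)

lemma phiRS_le_of_sum_eq (S : Finset (Fin n))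
    (hS : ∀ g : EuclideanSpace ℝ (Fin d) → ℝ, ∑ i ∈ S, g (Y i) = ∑ i ∈ S, g (x i)) :
    phiRS x Y ≤ -Real.log 2 * #S / n := by
  refine phiRS_le fun f _ => ?_
  have hsum : ∑ i, rsTerm (f (Y i) - f (x i)) ≤ -Real.log 2 * #S := calc
    ∑ i, rsTerm (f (Y i) - f (x i)) ≤ ∑ i ∈ S, rsTerm (f (Y i) - f (x i)) :=
      sum_le_sum_of_subset_of_nonpos' (subset_univ S) fun i _ _ => rsTerm_nonpos _
    _ ≤ ∑ i ∈ S, (-Real.log 2 - (f (Y i) - f (x i)) / 2) := sum_le_sum fun i _ => rsTerm_le _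
    _ = -Real.log 2 * #S := by
      rw [sum_sub_distrib, ← sum_div, sum_sub_distrib, hS f, sub_self, zero_div, sub_zero,
        sum_const, nsmul_eq_mul, mul_comm]
  rw [one_div_mul_eq_div]
  exact div_le_div_of_nonneg_right hsum n.cast_nonneg

lemma phiRS_le_card_cycles (hx : Injective x) :
    phiRS x Y ≤ -Real.log 2 * #(cycles x Y) / n :=
  phiRS_le_of_sum_eq _ (sum_cycles_comp_eq hx)

lemma exists_continuous_potential (hx : Injective x) {M : ℝ} (hM : 0 ≤ M) :
    ∃ f : EuclideanSpace ℝ (Fin d) → ℝ, Continuous f ∧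
      ∀ i, (OnCycle x Y i → f (Y i) - f (x i) = 0) ∧ (¬OnCycle x Y i → f (Y i) - f (x i) ≤ -M) := by
  obtain ⟨f, hf, hfv⟩ := exists_continuous_eqOn_of_finite
    ((Set.finite_range x).union (Set.finite_range Y))
    (extend x (fun j => M * #(reach x Y j)) 0)
  have hfx : ∀ j, f (x j) = M * #(reach x Y j) := fun j =>
    (hfv (Or.inl ⟨j, rfl⟩)).trans (hx.extend_apply _ _ _)
  refine ⟨f, hf, fun i => ?_⟩
  by_cases hedge : ∃ j, Edge x Y i j
  · obtain ⟨j, hij⟩ := hedge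
    rw [show Y i = x j from hij, hfx, hfx, ← mul_sub]
    refine ⟨fun hi => by rw [card_reach_of_onCycle hx hi hij, sub_self, mul_zero], fun hi => ?_⟩
    have hlt : (#(reach x Y j) : ℝ) + 1 ≤ #(reach x Y i) := by
      exact_mod_cast card_reach_lt_of_not_onCycle hi hij
    nlinarith
  · have hfy : f (Y i) = 0 := (hfv (Or.inr ⟨i, rfl⟩)).trans
      (extend_apply' _ _ _ fun ⟨j, hj⟩ => hedge ⟨j, hj.symm⟩)
    refine ⟨fun hi => absurd (hi.exists_edge.imp fun _ h => h.1) hedge, fun _ => ?_⟩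
    have hpos : (1 : ℝ) ≤ #(reach x Y i) := by exact_mod_cast card_reach_pos
    rw [hfy, hfx]
    nlinarith

lemma card_cycles_le_phiRS (hx : Injective x) :
    -Real.log 2 * #(cycles x Y) / n ≤ phiRS x Y := by
  set C := cycles x Y
  have hbound : ∀ M : ℝ, 0 ≤ M →
      (1 / (n : ℝ)) * (-Real.log 2 * #C + #Cᶜ * rsTerm (-M)) ≤ phiRS x Y := fun M hM => by
    obtain ⟨f, hf, hpot⟩ := exists_continuous_potential (Y := Y) hx hM
    refine le_trans (mul_le_mul_of_nonneg_left ?_ (by positivity)) (le_phiRS hf)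
    rw [← sum_add_sum_compl C]
    gcongr ?_ + ?_
    · rw [sum_congr rfl fun i hi => by rw [(hpot i).1 (mem_cycles.1 hi), rsTerm_zero],
        sum_const, nsmul_eq_mul, mul_comm]
    · rw [← nsmul_eq_mul, ← sum_const]
      exact sum_le_sum fun i hi =>
        rsTerm_antitone ((hpot i).2 fun h => (mem_compl.1 hi) (mem_cycles.2 h))
  have hlim : Tendsto (fun M : ℝ => (1 / (n : ℝ)) * (-Real.log 2 * #C + #Cᶜ * rsTerm (-M)))
      atTop (𝓝 ((1 / (n : ℝ)) * (-Real.log 2 * #C + #Cᶜ * 0))) :=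
    (((tendsto_rsTerm_atBot.comp tendsto_neg_atTop_atBot).const_mul _).const_add _).const_mul _
  rw [mul_zero, add_zero, one_div_mul_eq_div] at hlim
  exact le_of_tendsto hlim (eventually_atTop.2 ⟨0, hbound⟩)

theorem phiRS_eq (hx : Injective x) : phiRS x Y = -Real.log 2 * #(cycles x Y) / n :=
  (phiRS_le_card_cycles hx).antisymm (card_cycles_le_phiRS hx)

end Loss

section Minimum

variable {d n : ℕ} {x Y : Fin n → EuclideanSpace ℝ (Fin d)}

lemma neg_log_two_le_phiRS (hn : 0 < n) (hx : Injective x) : -Real.log 2 ≤ phiRS x Y := by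
  have hcard : (#(cycles x Y) : ℝ) ≤ n := by
    exact_mod_cast (card_le_univ _).trans_eq (Fintype.card_fin n)
  rw [phiRS_eq hx, le_div_iff₀ (by exact_mod_cast hn)]
  exact mul_le_mul_of_nonpos_left hcard (neg_nonpos.2 (Real.log_nonneg one_le_two))

lemma phiRS_eq_neg_log_two_iff (hn : 0 < n) (hx : Injective x) :
    phiRS x Y = -Real.log 2 ↔ cycles x Y = univ := by
  rw [phiRS_eq hx, div_eq_iff (by exact_mod_cast hn.ne'),
    mul_right_inj' (neg_ne_zero.2 (Real.log_pos one_lt_two).ne'), ← card_eq_iff_eq_univ,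
    Fintype.card_fin, Nat.cast_inj]

lemma phiRS_eq_neg_log_two_of_perm (hn : 0 < n) (hx : Injective x) (σ : Equiv.Perm (Fin n))
    (hσ : ∀ i, Y i = x (σ i)) : phiRS x Y = -Real.log 2 := by
  refine le_antisymm ?_ (neg_log_two_le_phiRS hn hx)
  have hsum : ∀ g : EuclideanSpace ℝ (Fin d) → ℝ, ∑ i, g (Y i) = ∑ i, g (x i) := fun g => by
    simp only [hσ]
    exact Equiv.sum_comp σ (g ∘ x)
  have hle := phiRS_le_of_sum_eq univ hsum
  rwa [card_univ, Fintype.card_fin, mul_div_cancel_right₀ _ (by exact_mod_cast hn.ne')] at hle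

lemma exists_forall_ne_of_cycles_ne_univ (hn : 0 < n) (hx : Injective x)
    (h : cycles x Y ≠ univ) : ∃ i, ∀ k, Y k ≠ x i := by
  by_contra! hall
  choose τ hτ using hall
  have hτ_bij : Bijective τ := Finite.injective_iff_bijective.1 fun i j hij =>
    hx (by rw [← hτ i, ← hτ j, hij])
  refine h ((phiRS_eq_neg_log_two_iff hn hx).1
    (phiRS_eq_neg_log_two_of_perm hn hx (Equiv.ofBijective τ hτ_bij).symm fun i => ?_))
  rw [← hτ, Equiv.ofBijective_apply_symm_apply τ hτ_bij i]

lemma phiRS_le_of_cycles_subset {Y' : Fin n → EuclideanSpace ℝ (Fin d)} (hx : Injective x)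
    (h : cycles x Y ⊆ cycles x Y') : phiRS x Y' ≤ phiRS x Y := by
  rw [phiRS_eq hx, phiRS_eq hx]
  gcongr ?_ / _
  exact mul_le_mul_of_nonpos_left (by exact_mod_cast card_le_card h)
    (neg_nonpos.2 (Real.log_nonneg one_le_two))

end Minimum

section Descent

lemma antitone_comp_trans {X : Type*} [TopologicalSpace X] {F : X → ℝ} {a b c : X}
    {p : Path a b} {q : Path b c} (hp : Antitone (F ∘ p)) (hq : Antitone (F ∘ q)) :
    Antitone (F ∘ p.trans q) := by
  intro s t hst
  have hst' : (s : ℝ) ≤ t := hst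
  simp only [comp_apply, Path.trans_apply]
  split_ifs with ht hs hs
  · exact hp (show (2 * s : ℝ) ≤ 2 * t by linarith)
  · exact absurd (hst'.trans ht) hs
  · calc F (q _) ≤ F (q 0) := hq unitInterval.nonneg'
      _ = F (p 1) := by rw [q.source, p.target]
      _ ≤ F (p _) := hp unitInterval.le_one'
  · exact hq (show (2 * s - 1 : ℝ) ≤ 2 * t - 1 by linarith)

lemma globalMinReachable_of_path {X : Type*} [TopologicalSpace X] {F : X → ℝ} {Y Z : X}
    (p : Path Y Z) (hp : Antitone (F ∘ p)) (hZ : ∀ W, F Z ≤ F W) : GlobalMinReachable F Y :=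
  ⟨p.extend, p.continuous_extend.continuousOn, p.extend_zero,
    fun s hs t ht hst => by rw [p.extend_apply hs, p.extend_apply ht]; exact hp hst,
    by rw [p.extend_one]; exact hZ⟩

def movePath {ι E : Type*} [DecidableEq ι] [AddCommGroup E] [Module ℝ E] [TopologicalSpace E]
    [ContinuousAdd E] [ContinuousSMul ℝ E] (Y : ι → E) (i : ι) (p : E) :
    Path Y (update Y i p) where
  toFun t := update Y i (Path.segment (Y i) p t)
  continuous_toFun := continuous_const.update i (Path.segment (Y i) p).continuous
  source' := by simp
  target' := by simp

end Descent

section Reachability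

variable {d n : ℕ} {x : Fin n → EuclideanSpace ℝ (Fin d)}

lemma antitone_phiRS_movePath (hx : Injective x) {Y : Fin n → EuclideanSpace ℝ (Fin d)}
    {i : Fin n} (hi : ∀ k, Y k ≠ x i) : Antitone (phiRS x ∘ movePath Y i (x i)) := by
  have hstart : ∀ t : unitInterval, (t : ℝ) ≠ 1 → phiRS x (movePath Y i (x i) t) = phiRS x Y := by
    intro t ht
    have hmove : ∀ k, movePath Y i (x i) t k ≠ x i := fun k => by
      by_cases hk : k = i
      · subst hk
        simp [movePath, AffineMap.lineMap_eq_right_iff, hi k, ht]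
      · simpa [movePath, update_of_ne hk] using hi k
    rw [phiRS_eq hx, phiRS_eq hx, cycles_eq_of_eq_off hi hmove fun k hk => update_of_ne hk _ _]
  have hend : phiRS x (update Y i (x i)) ≤ phiRS x Y :=
    phiRS_le_of_cycles_subset hx (cycles_ssubset_update hi).subset
  intro s t hst
  by_cases ht : (t : ℝ) = 1
  · rw [show t = 1 from Subtype.ext ht]
    by_cases hs : (s : ℝ) = 1
    · rw [show s = 1 from Subtype.ext hs]
    · simpa [hstart s hs] using hend
  · have hs : (s : ℝ) ≠ 1 := fun hs => ht (le_antisymm t.2.2 (hs ▸ hst))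
    simp only [comp_apply, hstart s hs, hstart t ht, le_refl]

theorem exists_antitone_path_to_min (hn : 0 < n) (hx : Injective x)
    (Y : Fin n → EuclideanSpace ℝ (Fin d)) :
    ∃ Z, (∀ W, phiRS x Z ≤ phiRS x W) ∧ ∃ p : Path Y Z, Antitone (phiRS x ∘ p) := by
  by_cases hC : cycles x Y = univ
  · refine ⟨Y, fun W => ?_, Path.refl Y, fun _ _ _ => le_rfl⟩
    rw [(phiRS_eq_neg_log_two_iff hn hx).2 hC]
    exact neg_log_two_le_phiRS hn hx
  obtain ⟨i, hi⟩ := exists_forall_ne_of_cycles_ne_univ hn hx hC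
  obtain ⟨Z, hZ, q, hq⟩ := exists_antitone_path_to_min hn hx (update Y i (x i))
  exact ⟨Z, hZ, (movePath Y i (x i)).trans q,
    antitone_comp_trans (antitone_phiRS_movePath hx hi) hq⟩
termination_by #(cycles x Y)ᶜ
decreasing_by exact card_lt_card (compl_ssubset_compl.2 (cycles_ssubset_update hi))

end Reachability

theorem stmt8_general {d n : ℕ} (hn : 1 ≤ n)
    (x : Fin n → EuclideanSpace ℝ (Fin d)) (hx : Function.Injective x) :
    (∀ Y : Fin n → EuclideanSpace ℝ (Fin d), -Real.log 2 ≤ phiRS x Y) ∧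
    (∀ Y : Fin n → EuclideanSpace ℝ (Fin d),
      phiRS x Y = -Real.log 2 ↔ ∃ σ : Equiv.Perm (Fin n), ∀ i, Y i = x (σ i)) ∧
    (∀ Y : Fin n → EuclideanSpace ℝ (Fin d),
      GlobalMinReachable (phiRS x) Y) := by
  refine ⟨fun Y => neg_log_two_le_phiRS hn hx, fun Y => ⟨fun h => ?_, ?_⟩, fun Y => ?_⟩
  · exact exists_perm_of_cycles_eq_univ hx ((phiRS_eq_neg_log_two_iff hn hx).1 h)
  · rintro ⟨σ, hσ⟩
    exact phiRS_eq_neg_log_two_of_perm hn hx σ hσ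
  · obtain ⟨Z, hZ, p, hp⟩ := exists_antitone_path_to_min hn hx Y
    exact globalMinReachable_of_path p hp hZ

theorem stmt8 {d n : ℕ} (hd : 1 ≤ d) (hn : 1 ≤ n)
    (x : Fin n → EuclideanSpace ℝ (Fin d)) (hx : Function.Injective x) :
    (∀ Y : Fin n → EuclideanSpace ℝ (Fin d), -Real.log 2 ≤ phiRS x Y) ∧
    (∀ Y : Fin n → EuclideanSpace ℝ (Fin d),
      phiRS x Y = -Real.log 2 ↔ ∃ σ : Equiv.Perm (Fin n), ∀ i, Y i = x (σ i)) ∧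
    (∀ Y : Fin n → EuclideanSpace ℝ (Fin d),
      GlobalMinReachable (phiRS x) Y) :=
  stmt8_general hn x hx
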